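/- arXiv:2312.02089 — 2 statements merged into one kernel-verified Lean document; each statement's English description precedes it below -/
import Mathlib

section
/- Let (X, π) be a weighted n-partite simplicial complex and let I, J ⊆ [n] be disjoint, with I ∪ J ⊆ [n] and every link graph of (X, π) connected. Then cos(U_I, U_J) ≤ ε^{I→J}, where U_I and U_J are the subspaces of functions on the top faces depending only on the coordinates outside I and outside J respectively. -/
open Finset
open scoped Classical

noncomputable section

namespace PaperFormal

/-- A weighted `n`-partite simplicial complex: a nonempty finite set `Ω` of `n`-tuples
(the top faces, each tuple picking one element from each side `U i`) together with a
full-support probability distribution `π` on it. -/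
structure WPC (n : ℕ) (U : Fin n → Type*) [∀ i, Fintype (U i)] [∀ i, DecidableEq (U i)] where
  Ω : Finset (∀ i, U i)
  nonempty : Ω.Nonempty
  π : (∀ i, U i) → ℝ
  nonneg : ∀ ω, 0 ≤ π ω
  support : ∀ ω, 0 < π ω ↔ ω ∈ Ω
  sum_one : ∑ ω : ∀ i, U i, π ω = 1

/-- Partial assignments to the coordinates in `S`. -/
abbrev PAssign {n : ℕ} (U : Fin n → Type*) (S : Finset (Fin n)) : Type _ :=
  ∀ i : {x : Fin n // x ∈ S}, U i.1

variable {n : ℕ} {U : Fin n → Type*} [∀ i, Fintype (U i)] [∀ i, DecidableEq (U i)]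

/-- Restriction of a tuple to the coordinates in `S`. -/
def restr (S : Finset (Fin n)) (ω : ∀ i, U i) : PAssign U S := fun i => ω i.1

/-- The unique assignment to the empty set of coordinates. -/
def emptyA : PAssign U (∅ : Finset (Fin n)) := fun i => absurd i.2 (Finset.notMem_empty i.1)

/-- Probability of the event `E` under `π`. -/
def pr (X : WPC n U) (E : (∀ i, U i) → Prop) : ℝ :=
  ∑ ω : ∀ i, U i, if E ω then X.π ω else 0

lemma pr_congr (X : WPC n U) {E F : (∀ i, U i) → Prop} (h : ∀ ω, E ω ↔ F ω) :
    pr X E = pr X F :=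
  Finset.sum_congr rfl fun ω _ => if_congr (h ω) rfl rfl

/-- The `S`-marginal of `π`, evaluated at the partial assignment `α`. -/
def marg (X : WPC n U) (S : Finset (Fin n)) (α : PAssign U S) : ℝ :=
  pr X fun ω => restr S ω = α

/-- The pinned marginal `π_T^{(α)}`: the probability that the coordinates in `T` agree
with `β`, conditioned on the coordinates in `S` agreeing with `α`. -/
def cmarg (X : WPC n U) {S T : Finset (Fin n)} (α : PAssign U S) (β : PAssign U T) : ℝ :=
  pr X (fun ω => restr S ω = α ∧ restr T ω = β) / marg X S α

/-- The colored random walk `C_α^{I → J}`: entry `(τI, τJ)` is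
`Pr[ω_J = τJ | ω_I = τI, ω_S = α]`. -/
def Cwalk (X : WPC n U) (S I J : Finset (Fin n)) (α : PAssign U S)
    (τI : PAssign U I) (τJ : PAssign U J) : ℝ :=
  pr X (fun ω => restr S ω = α ∧ restr I ω = τI ∧ restr J ω = τJ) /
    pr X (fun ω => restr S ω = α ∧ restr I ω = τI)

/-- The second largest singular value of a row-stochastic matrix `M` satisfying
`μA M = μB`, with respect to the inner products weighted by `μA` and `μB`, via its
variational characterization
`σ₂(M) = sup { ⟨f, M g⟩_{μA} : ⟨f,1⟩_{μA} = ⟨g,1⟩_{μB} = 0, ‖f‖_{μA} = ‖g‖_{μB} = 1 }`. -/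
def sigma2 {A B : Type*} [Fintype A] [Fintype B]
    (μA : A → ℝ) (μB : B → ℝ) (M : A → B → ℝ) : ℝ :=
  sSup { r : ℝ | ∃ f : A → ℝ, ∃ g : B → ℝ,
    (∑ a, μA a * f a) = 0 ∧ (∑ b, μB b * g b) = 0 ∧
    (∑ a, μA a * f a ^ 2) = 1 ∧ (∑ b, μB b * g b ^ 2) = 1 ∧
    r = ∑ a, μA a * f a * ∑ b, M a b * g b }

/-- The second largest singular value `σ₂(C_α^{I → J})`, with respect to the inner
products weighted by the pinned marginals `π_I^{(α)}` and `π_J^{(α)}`. -/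
def sigma2C (X : WPC n U) (S I J : Finset (Fin n)) (α : PAssign U S) : ℝ :=
  sigma2 (fun τI : PAssign U I => cmarg X α τI) (fun τJ : PAssign U J => cmarg X α τJ)
    (Cwalk X S I J α)

/-- `ε^{I → J}`: the maximum of `σ₂(C_α^{I → J})` over all partial assignments `α`
to the coordinates outside `I ∪ J` (realizable on `Ω`). -/
def epsIJ (X : WPC n U) (I J : Finset (Fin n)) : ℝ :=
  sSup { r : ℝ | ∃ α : PAssign U (I ∪ J)ᶜ,
    0 < marg X (I ∪ J)ᶜ α ∧ r = sigma2C X (I ∪ J)ᶜ I J α }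

/-- `π` is `(ε 0, …, ε (n-2))`-product: for every realizable pinning `α` of a set `S` of at
most `n - 2` coordinates, and all distinct `i, j ∉ S`, `σ₂(C_α^{i → j}) ≤ ε |S|`. -/
def isProduct (X : WPC n U) (ε : ℕ → ℝ) : Prop :=
  ∀ S : Finset (Fin n), S.card ≤ n - 2 → ∀ α : PAssign U S, 0 < marg X S α →
    ∀ i j : Fin n, i ∉ S → j ∉ S → i ≠ j → sigma2C X S {i} {j} α ≤ ε S.card

/-- The update operator `Q_i`: resample the `i`-th coordinate according to `π`,
conditionally on all the other coordinates. -/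
def Qmat (X : WPC n U) (i : Fin n) : Matrix (∀ i, U i) (∀ i, U i) ℝ :=
  Matrix.of fun ω ω' =>
    pr X (fun τ => τ = ω' ∧ restr {i}ᶜ τ = restr {i}ᶜ ω) /
      pr X (fun τ => restr {i}ᶜ τ = restr {i}ᶜ ω)

/-- The sequential sweep `P_seq^{(s)} = Q_{s 0} Q_{s 1} ⋯ Q_{s (n-1)}`. -/
def Psq (X : WPC n U) (s : Equiv.Perm (Fin n)) : Matrix (∀ i, U i) (∀ i, U i) ℝ :=
  (List.ofFn fun j : Fin n => Qmat X (s j)).prod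

/-- The second largest singular value of the sequential sweep, with respect to the
inner product weighted by its stationary distribution `π`. -/
def sigma2P (X : WPC n U) (s : Equiv.Perm (Fin n)) : ℝ :=
  sigma2 X.π X.π fun ω ω' => Psq X s ω ω'

/-- The link graph `G_α` of a pinning `α` of the coordinates in `S`: vertices are pairs
`(i, x)` with `i ∉ S`, and `(i,x)`, `(j,y)` are adjacent when `i ≠ j` and the event
`{ω_i = x, ω_j = y, ω_S = α}` has positive probability. -/
def linkGraph (X : WPC n U) (S : Finset (Fin n)) (α : PAssign U S) :
    SimpleGraph ((i : Fin n) × U i) where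
  Adj v w := v.1 ≠ w.1 ∧ v.1 ∉ S ∧ w.1 ∉ S ∧
    0 < pr X fun ω => restr S ω = α ∧ ω v.1 = v.2 ∧ ω w.1 = w.2
  symm := by
    constructor
    rintro v w ⟨h1, h2, h3, h4⟩
    refine ⟨h1.symm, h3, h2, ?_⟩
    have e : pr X (fun ω => restr S ω = α ∧ ω w.1 = w.2 ∧ ω v.1 = v.2)
        = pr X (fun ω => restr S ω = α ∧ ω v.1 = v.2 ∧ ω w.1 = w.2) :=
      pr_congr X fun ω => by tauto
    rw [e]; exact h4
  loopless := by constructor; rintro v ⟨h1, -⟩; exact h1 rfl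

/-- `(X, π)` is link-connected: in every link graph (of a realizable pinning of at most
`n - 2` coordinates), every two valid vertices are connected by a path. -/
def linkConnected (X : WPC n U) : Prop :=
  ∀ S : Finset (Fin n), S.card ≤ n - 2 → ∀ α : PAssign U S, 0 < marg X S α →
    ∀ v w : (i : Fin n) × U i, v.1 ∉ S → w.1 ∉ S →
      0 < pr X (fun ω => restr S ω = α ∧ ω v.1 = v.2) →
      0 < pr X (fun ω => restr S ω = α ∧ ω w.1 = w.2) →
      (linkGraph X S α).Reachable v w

/-- The stationary measure of the random walk on the link graph `G_α`. -/
def linkMeas (X : WPC n U) (S : Finset (Fin n)) (α : PAssign U S) :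
    (i : Fin n) × U i → ℝ :=
  fun v => if v.1 ∈ S then 0 else
    (1 / ((n : ℝ) - (S.card : ℝ))) *
      (pr X (fun ω => restr S ω = α ∧ ω v.1 = v.2) / marg X S α)

/-- The random walk matrix `M_α` of the link graph `G_α`. -/
def linkWalk (X : WPC n U) (S : Finset (Fin n)) (α : PAssign U S) :
    (i : Fin n) × U i → (i : Fin n) × U i → ℝ :=
  fun v w =>
    if v.1 = w.1 ∨ v.1 ∈ S ∨ w.1 ∈ S then 0 else
      (1 / ((n : ℝ) - (S.card : ℝ) - 1)) *
        (pr X (fun ω => restr S ω = α ∧ ω v.1 = v.2 ∧ ω w.1 = w.2) /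
          pr X (fun ω => restr S ω = α ∧ ω v.1 = v.2))

/-- The second largest eigenvalue of a random walk matrix `M`, self-adjoint with respect
to the probability measure `μ`, via its variational characterization. -/
def lambda2 {A : Type*} [Fintype A] (μ : A → ℝ) (M : A → A → ℝ) : ℝ :=
  sSup { r : ℝ | ∃ f : A → ℝ,
    (∑ a, μ a * f a) = 0 ∧ (∑ a, μ a * f a ^ 2) = 1 ∧
    r = ∑ a, μ a * f a * ∑ b, M a b * f b }

/-- `(X, π)` is a `(γ 0, …, γ (n-2))`-local spectral expander:
`λ₂(M_α) ≤ γ |S|` for every realizable pinning `α` of at most `n - 2` coordinates. -/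
def isLocalExpander (X : WPC n U) (γ : ℕ → ℝ) : Prop :=
  ∀ S : Finset (Fin n), S.card ≤ n - 2 → ∀ α : PAssign U S, 0 < marg X S α →
    lambda2 (linkMeas X S α) (linkWalk X S α) ≤ γ S.card

/-- Kullback–Leibler divergence `D(μ ‖ ν) = Σ_a μ(a) log (μ(a) / ν(a))`. -/
def KL {A : Type*} [Fintype A] (μ ν : A → ℝ) : ℝ :=
  ∑ a, μ a * Real.log (μ a / ν a)

/-- `μ` is a probability distribution supported on `{a | P a}`. -/
def distOn {A : Type*} [Fintype A] (P : A → Prop) (μ : A → ℝ) : Prop :=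
  (∀ a, 0 ≤ μ a) ∧ (∑ a, μ a) = 1 ∧ ∀ a, ¬ P a → μ a = 0

/-- The `(I, J)` entropy contraction parameter `η^{I → J} = 1 - κ^{I → J}`, where
`κ^{I → J}` is the supremum of `D(μ C_α^{I→J} ‖ π_J^{(α)}) / D(μ ‖ π_I^{(α)})` over all
realizable pinnings `α` of the coordinates outside `I ∪ J` and all distributions `μ` on
the assignments of `I` compatible with `α`. -/
def etaIJ (X : WPC n U) (I J : Finset (Fin n)) : ℝ :=
  1 - sSup { r : ℝ | ∃ α : PAssign U (I ∪ J)ᶜ, 0 < marg X (I ∪ J)ᶜ α ∧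
    ∃ μ : PAssign U I → ℝ,
      distOn (fun τ => 0 < pr X fun ω => restr (I ∪ J)ᶜ ω = α ∧ restr I ω = τ) μ ∧
      KL μ (fun τ : PAssign U I => cmarg X α τ) ≠ 0 ∧
      r = KL (fun τJ : PAssign U J => ∑ τI : PAssign U I, μ τI * Cwalk X (I ∪ J)ᶜ I J α τI τJ)
            (fun τJ : PAssign U J => cmarg X α τJ) /
          KL μ (fun τ : PAssign U I => cmarg X α τ) }

/-- The entropy contraction factor `EC(M) = 1 - sup_μ D(μ M ‖ π) / D(μ ‖ π)` of a random
walk matrix `M` with stationary distribution `π`. -/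
def EC (X : WPC n U) (M : Matrix (∀ i, U i) (∀ i, U i) ℝ) : ℝ :=
  1 - sSup { r : ℝ | ∃ μ : (∀ i, U i) → ℝ, distOn (fun ω => ω ∈ X.Ω) μ ∧
    KL μ X.π ≠ 0 ∧ r = KL (Matrix.vecMul μ M) X.π / KL μ X.π }

/-- The `π`-weighted inner product on `ℝ^Ω`. -/
def ip (X : WPC n U) (f g : {ω // ω ∈ X.Ω} → ℝ) : ℝ :=
  ∑ ω : {ω // ω ∈ X.Ω}, X.π ω.1 * f ω * g ω

/-- The indicator vector `u_α ∈ ℝ^Ω` of the partial assignment `α` to the coordinates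
outside `T`. -/
def uvec (X : WPC n U) (T : Finset (Fin n)) (α : PAssign U Tᶜ) : {ω // ω ∈ X.Ω} → ℝ :=
  fun ω => if restr Tᶜ ω.1 = α then 1 else 0

/-- The subspace `U_T = span { u_α : α an assignment to the coordinates outside T }`. -/
def Uspan (X : WPC n U) (T : Finset (Fin n)) : Submodule ℝ ({ω // ω ∈ X.Ω} → ℝ) :=
  Submodule.span ℝ { f | ∃ α : PAssign U Tᶜ, f = uvec X T α }

/-- The subspace of functions on `Ω` depending only on the coordinates outside `T`. -/
def Uinv (X : WPC n U) (T : Finset (Fin n)) : Submodule ℝ ({ω // ω ∈ X.Ω} → ℝ) where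
  carrier := { f | ∀ ω ω' : {ω // ω ∈ X.Ω}, restr Tᶜ ω.1 = restr Tᶜ ω'.1 → f ω = f ω' }
  add_mem' := by
    intro f g hf hg ω ω' h
    simp only [Pi.add_apply, hf ω ω' h, hg ω ω' h]
  zero_mem' := by intro ω ω' h; rfl
  smul_mem' := by
    intro c f hf ω ω' h
    simp only [Pi.smul_apply, hf ω ω' h]

/-- The orthogonal complement (with respect to `⟨·,·⟩_π`) of a subspace, as a set. -/
def orthC (X : WPC n U) (W : Submodule ℝ ({ω // ω ∈ X.Ω} → ℝ)) :
    Set ({ω // ω ∈ X.Ω} → ℝ) :=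
  { f | ∀ g ∈ W, ip X f g = 0 }

/-- The cosine of the angle between two subspaces of `ℝ^Ω`:
`cos(A,B) = sup { ⟨u,v⟩_π : u ∈ A ∩ (A ⊓ B)ᗮ, v ∈ B ∩ (A ⊓ B)ᗮ, ‖u‖_π = ‖v‖_π = 1 }`. -/
def cosAngle (X : WPC n U) (A B : Submodule ℝ ({ω // ω ∈ X.Ω} → ℝ)) : ℝ :=
  sSup { r : ℝ | ∃ u, u ∈ A ∧ u ∈ orthC X (A ⊓ B) ∧
    ∃ v, v ∈ B ∧ v ∈ orthC X (A ⊓ B) ∧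
    ip X u u = 1 ∧ ip X v v = 1 ∧ r = ip X u v }

/-- The update operator `Q_i` as an operator on `ℝ^Ω`. -/
def Qop (X : WPC n U) (i : Fin n) (f : {ω // ω ∈ X.Ω} → ℝ) : {ω // ω ∈ X.Ω} → ℝ :=
  fun ω => ∑ ω' : {ω // ω ∈ X.Ω}, Qmat X i ω.1 ω'.1 * f ω'

/-- Concatenation of partial assignments on disjoint coordinate sets. -/
def joinAssign {S T : Finset (Fin n)} (β : PAssign U S) (α : PAssign U T) :
    PAssign U (S ∪ T) :=
  fun i => if h : i.1 ∈ S then β ⟨i.1, h⟩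
    else α ⟨i.1, (Finset.mem_union.mp i.2).resolve_left h⟩

/-- The `S`-marginal of a (not necessarily normalized) distribution `ν` on tuples. -/
def distMarg (ν : (∀ i, U i) → ℝ) (S : Finset (Fin n)) (a : PAssign U S) : ℝ :=
  ∑ ω : ∀ i, U i, if restr S ω = a then ν ω else 0

/-- The distribution `ν` conditioned on the `i`-th coordinate being `x`. -/
def condAt (ν : (∀ i, U i) → ℝ) (i : Fin n) (x : U i) : (∀ i, U i) → ℝ :=
  fun ω => if ω i = x then ν ω / (∑ ω' : ∀ i, U i, if ω' i = x then ν ω' else 0) else 0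

/-- The influence matrix `Inf_α` of the pinning `α` of the coordinates in `S`:
`Inf_α((i,x),(j,y)) = Pr[ω_j = y | ω_i = x, ω_S = α] - Pr[ω_j = y | ω_S = α]`
for `i ≠ j` outside `S`, and `0` otherwise. -/
def InfMat (X : WPC n U) (S : Finset (Fin n)) (α : PAssign U S) :
    Matrix ((i : Fin n) × U i) ((i : Fin n) × U i) ℝ :=
  Matrix.of fun v w =>
    if v.1 = w.1 ∨ v.1 ∈ S ∨ w.1 ∈ S then 0 else
      pr X (fun ω => restr S ω = α ∧ ω v.1 = v.2 ∧ ω w.1 = w.2) /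
          pr X (fun ω => restr S ω = α ∧ ω v.1 = v.2) -
        pr X (fun ω => restr S ω = α ∧ ω w.1 = w.2) / marg X S α

/-- `π` is `(c 0, …, c (n-2))`-spectrally independent: every (real) eigenvalue of the
influence matrix of a realizable pinning of at most `n - 2` coordinates is at most
`c |S|`. -/
def spectrallyIndependent (X : WPC n U) (c : ℕ → ℝ) : Prop :=
  ∀ S : Finset (Fin n), S.card ≤ n - 2 → ∀ α : PAssign U S, 0 < marg X S α →
    ∀ r : ℝ,
      (∃ v : ((i : Fin n) × U i) → ℝ, v ≠ 0 ∧ (InfMat X S α).mulVec v = r • v) →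
      r ≤ c S.card

end PaperFormal

namespace PaperFormal

variable {n : ℕ} {U : Fin n → Type*} [∀ i, Fintype (U i)] [∀ i, DecidableEq (U i)]

/-!
Pin the coordinates outside `I ∪ J` to `α`. A unit vector of `U_I ∩ (U_I ∩ U_J)^⊥` is a function of
`(α, ω_J)` with mean zero on every fibre `{ω_{(I ∪ J)ᶜ} = α}`, since the indicator of the fibre
lies in `U_I ∩ U_J`; symmetrically for `U_J` with `ω_I`. On the fibre of `α`, the inner product of
two such functions is the bilinear form of `C_α^{I → J}` evaluated on mean-zero functions, hence
at most `σ₂(C_α^{I → J}) ≤ ε^{I → J}` times the product of their norms on that fibre; by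
Cauchy–Schwarz over `α` these products sum to at most `1`.
-/

section Sigma2

variable {A B : Type*} [Fintype A] [Fintype B]

def sigma2Set (μA : A → ℝ) (μB : B → ℝ) (M : A → B → ℝ) : Set ℝ :=
  { r : ℝ | ∃ f : A → ℝ, ∃ g : B → ℝ,
    (∑ a, μA a * f a) = 0 ∧ (∑ b, μB b * g b) = 0 ∧
    (∑ a, μA a * f a ^ 2) = 1 ∧ (∑ b, μB b * g b ^ 2) = 1 ∧
    r = ∑ a, μA a * f a * ∑ b, M a b * g b }

lemma sigma2_eq_sSup (μA : A → ℝ) (μB : B → ℝ) (M : A → B → ℝ) :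
    sigma2 μA μB M = sSup (sigma2Set μA μB M) := rfl

lemma neg_mem_sigma2Set {μA : A → ℝ} {μB : B → ℝ} {M : A → B → ℝ} {r : ℝ}
    (hr : r ∈ sigma2Set μA μB M) : -r ∈ sigma2Set μA μB M := by
  obtain ⟨f, g, hf, hg, hf2, hg2, rfl⟩ := hr
  refine ⟨f, -g, hf, ?_, hf2, ?_, ?_⟩
  · simpa using hg
  · simpa using hg2
  · simp [Finset.sum_neg_distrib]

lemma sigma2_nonneg (μA : A → ℝ) (μB : B → ℝ) (M : A → B → ℝ) : 0 ≤ sigma2 μA μB M := by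
  rw [sigma2_eq_sSup]
  by_cases hb : BddAbove (sigma2Set μA μB M)
  · rcases (sigma2Set μA μB M).eq_empty_or_nonempty with he | ⟨r, hr⟩
    · rw [he, Real.sSup_empty]
    · have h₁ := le_csSup hb hr
      have h₂ := le_csSup hb (neg_mem_sigma2Set hr)
      linarith
  · rw [Real.sSup_of_not_bddAbove hb]

lemma sigma2_eq_zero_of_forall_eq_zero {μA : A → ℝ} (hμA : ∀ a, μA a = 0)
    (μB : B → ℝ) (M : A → B → ℝ) : sigma2 μA μB M = 0 := by
  have hempty : sigma2Set μA μB M = ∅ := by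
    refine Set.eq_empty_of_forall_notMem ?_
    rintro r ⟨f, g, -, -, hf2, -⟩
    simp [hμA] at hf2
  rw [sigma2_eq_sSup, hempty, Real.sSup_empty]

lemma sum_div_mul_eq (μ h : A → ℝ) (c : ℝ) : ∑ a, μ a / c * h a = (∑ a, μ a * h a) / c := by
  simp_rw [div_mul_eq_mul_div, ← Finset.sum_div]

lemma div_sqrt_mul_sqrt_mem_sigma2Set {μA : A → ℝ} {μB : B → ℝ} {M : A → B → ℝ} {f : A → ℝ}
    {g : B → ℝ} (hf : ∑ a, μA a * f a = 0) (hg : ∑ b, μB b * g b = 0)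
    (hf2 : 0 < ∑ a, μA a * f a ^ 2) (hg2 : 0 < ∑ b, μB b * g b ^ 2) :
    (∑ a, μA a * f a * ∑ b, M a b * g b) / (√(∑ a, μA a * f a ^ 2) * √(∑ b, μB b * g b ^ 2))
      ∈ sigma2Set μA μB M := by
  refine ⟨fun a => f a / √(∑ a, μA a * f a ^ 2), fun b => g b / √(∑ b, μB b * g b ^ 2),
    ?_, ?_, ?_, ?_, ?_⟩
  · simp_rw [mul_div_assoc']
    rw [← Finset.sum_div, hf, zero_div]
  · simp_rw [mul_div_assoc']
    rw [← Finset.sum_div, hg, zero_div]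
  · simp_rw [div_pow, mul_div_assoc']
    rw [← Finset.sum_div, Real.sq_sqrt hf2.le, div_self hf2.ne']
  · simp_rw [div_pow, mul_div_assoc']
    rw [← Finset.sum_div, Real.sq_sqrt hg2.le, div_self hg2.ne']
  · simp only [Finset.mul_sum, Finset.sum_div]
    exact Finset.sum_congr rfl fun a _ => Finset.sum_congr rfl fun b _ => by ring

end Sigma2

section JointWeights

variable {A B : Type*} [Fintype A] [Fintype B] (w : A → B → ℝ)

def rowMass (a : A) : ℝ := ∑ b, w a b

def colMass (b : B) : ℝ := ∑ a, w a b

def totalMass : ℝ := ∑ a, rowMass w a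

def jointSigma2 : ℝ :=
  sigma2 (fun a => rowMass w a / totalMass w) (fun b => colMass w b / totalMass w)
    (fun a b => w a b / rowMass w a)

lemma sum_sum_mul_left (f : A → ℝ) : ∑ a, ∑ b, w a b * f a = ∑ a, rowMass w a * f a := by
  simp only [rowMass, Finset.sum_mul]

lemma sum_sum_mul_right (g : B → ℝ) : ∑ a, ∑ b, w a b * g b = ∑ b, colMass w b * g b := by
  rw [Finset.sum_comm]
  simp only [colMass, Finset.sum_mul]

variable {w}

lemma totalMass_nonneg (hw : ∀ a b, 0 ≤ w a b) : 0 ≤ totalMass w :=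
  Finset.sum_nonneg fun a _ => Finset.sum_nonneg fun b _ => hw a b

lemma sum_rowMass_mul_sq_nonneg (hw : ∀ a b, 0 ≤ w a b) (f : A → ℝ) :
    0 ≤ ∑ a, rowMass w a * f a ^ 2 :=
  Finset.sum_nonneg fun a _ => mul_nonneg (Finset.sum_nonneg fun b _ => hw a b) (sq_nonneg _)

lemma sum_colMass_mul_sq_nonneg (hw : ∀ a b, 0 ≤ w a b) (g : B → ℝ) :
    0 ≤ ∑ b, colMass w b * g b ^ 2 :=
  Finset.sum_nonneg fun b _ => mul_nonneg (Finset.sum_nonneg fun a _ => hw a b) (sq_nonneg _)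

lemma sum_sum_mul_mul_le (hw : ∀ a b, 0 ≤ w a b) (f : A → ℝ) (g : B → ℝ) :
    ∑ a, ∑ b, w a b * f a * g b
      ≤ √(∑ a, rowMass w a * f a ^ 2) * √(∑ b, colMass w b * g b ^ 2) := by
  have hcs := Finset.sum_sq_le_sum_mul_sum_of_sq_le_mul Finset.univ
    (r := fun p : A × B => w p.1 p.2 * f p.1 * g p.2)
    (f := fun p => w p.1 p.2 * f p.1 ^ 2) (g := fun p => w p.1 p.2 * g p.2 ^ 2)
    (fun p _ => mul_nonneg (hw _ _) (sq_nonneg _)) (fun p _ => mul_nonneg (hw _ _) (sq_nonneg _))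
    (fun p _ => le_of_eq (by ring))
  simp only [Fintype.sum_prod_type] at hcs
  rw [sum_sum_mul_left w (fun a => f a ^ 2), sum_sum_mul_right w (fun b => g b ^ 2)] at hcs
  exact (Real.le_sqrt_of_sq_le hcs).trans_eq
    (Real.sqrt_mul (sum_rowMass_mul_sq_nonneg hw f) _)

lemma sum_mul_sum_kernel_eq (hw : ∀ a b, 0 ≤ w a b) (f : A → ℝ) (g : B → ℝ) :
    ∑ a, rowMass w a / totalMass w * f a * ∑ b, w a b / rowMass w a * g b
      = (∑ a, ∑ b, w a b * f a * g b) / totalMass w := by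
  rw [Finset.sum_div]
  refine Finset.sum_congr rfl fun a _ => ?_
  rw [Finset.mul_sum, Finset.sum_div]
  refine Finset.sum_congr rfl fun b _ => ?_
  by_cases ha : rowMass w a = 0
  · have hab : w a b = 0 :=
      (Finset.sum_eq_zero_iff_of_nonneg fun b _ => hw a b).mp ha b (Finset.mem_univ b)
    simp [ha, hab]
  · field_simp

lemma jointSigma2_bddAbove (hw : ∀ a b, 0 ≤ w a b) :
    BddAbove (sigma2Set (fun a => rowMass w a / totalMass w)
      (fun b => colMass w b / totalMass w) (fun a b => w a b / rowMass w a)) := by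
  refine ⟨1, ?_⟩
  rintro _ ⟨f, g, -, -, hf2, hg2, rfl⟩
  rw [sum_mul_sum_kernel_eq hw]
  rcases (totalMass_nonneg hw).eq_or_lt with hm | hm
  · rw [← hm, div_zero]
    exact zero_le_one
  rw [sum_div_mul_eq, div_eq_one_iff_eq hm.ne'] at hf2 hg2
  rw [div_le_one hm]
  calc ∑ a, ∑ b, w a b * f a * g b
      ≤ √(∑ a, rowMass w a * f a ^ 2) * √(∑ b, colMass w b * g b ^ 2) :=
        sum_sum_mul_mul_le hw f g
    _ = totalMass w := by rw [hf2, hg2, Real.mul_self_sqrt hm.le]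

lemma totalMass_pos (hw : ∀ a b, 0 ≤ w a b) {f : A → ℝ} (hf : 0 < ∑ a, rowMass w a * f a ^ 2) :
    0 < totalMass w := by
  refine (totalMass_nonneg hw).lt_of_ne fun hm => hf.ne' ?_
  have hrow : ∀ a, rowMass w a = 0 := fun a =>
    (Finset.sum_eq_zero_iff_of_nonneg fun a _ => Finset.sum_nonneg fun b _ => hw a b).mp
      hm.symm a (Finset.mem_univ a)
  simp [hrow]

theorem sum_sum_mul_mul_le_jointSigma2 (hw : ∀ a b, 0 ≤ w a b) {f : A → ℝ} {g : B → ℝ}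
    (hf : ∑ a, rowMass w a * f a = 0) (hg : ∑ b, colMass w b * g b = 0) :
    ∑ a, ∑ b, w a b * f a * g b
      ≤ jointSigma2 w * √(∑ a, rowMass w a * f a ^ 2) * √(∑ b, colMass w b * g b ^ 2) := by
  set P := ∑ a, rowMass w a * f a ^ 2
  set Q := ∑ b, colMass w b * g b ^ 2
  have hcs : ∑ a, ∑ b, w a b * f a * g b ≤ √P * √Q := sum_sum_mul_mul_le hw f g
  rcases (mul_nonneg (Real.sqrt_nonneg P) (Real.sqrt_nonneg Q)).eq_or_lt with hPQ | hPQ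
  · rwa [mul_assoc, ← hPQ, mul_zero, hPQ]
  have hP : 0 < P := Real.sqrt_pos.mp (pos_of_mul_pos_left hPQ (Real.sqrt_nonneg Q))
  have hQ : 0 < Q := Real.sqrt_pos.mp (pos_of_mul_pos_right hPQ (Real.sqrt_nonneg P))
  have hm := totalMass_pos hw hP
  have hf' : ∑ a, rowMass w a / totalMass w * f a = 0 := by rw [sum_div_mul_eq, hf, zero_div]
  have hg' : ∑ b, colMass w b / totalMass w * g b = 0 := by rw [sum_div_mul_eq, hg, zero_div]
  have hP' : 0 < ∑ a, rowMass w a / totalMass w * f a ^ 2 := by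
    rw [sum_div_mul_eq]
    exact div_pos hP hm
  have hQ' : 0 < ∑ b, colMass w b / totalMass w * g b ^ 2 := by
    rw [sum_div_mul_eq]
    exact div_pos hQ hm
  have hmem := div_sqrt_mul_sqrt_mem_sigma2Set (M := fun a b => w a b / rowMass w a) hf' hg' hP' hQ'
  have := le_csSup (jointSigma2_bddAbove hw) hmem
  rw [sum_mul_sum_kernel_eq hw, sum_div_mul_eq, sum_div_mul_eq, Real.sqrt_div hP.le,
    Real.sqrt_div hQ.le, div_mul_div_comm, Real.mul_self_sqrt hm.le,
    div_div_div_cancel_right₀ hm.ne', div_le_iff₀ hPQ] at this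
  rwa [mul_assoc]

end JointWeights

section Glue

variable (I J : Finset (Fin n))

def glue (α : PAssign U (I ∪ J)ᶜ) (τI : PAssign U I) (τJ : PAssign U J) : ∀ i, U i :=
  fun i =>
    if h : i ∈ I then τI ⟨i, h⟩
    else if h' : i ∈ J then τJ ⟨i, h'⟩
    else α ⟨i, by simp [h, h']⟩

omit [∀ i, Fintype (U i)] [∀ i, DecidableEq (U i)] in
lemma restr_compl_glue (α : PAssign U (I ∪ J)ᶜ) (τI : PAssign U I) (τJ : PAssign U J) :
    restr (I ∪ J)ᶜ (glue I J α τI τJ) = α := by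
  funext i
  have hi := Finset.mem_compl.mp i.2
  simp only [Finset.mem_union, not_or] at hi
  simp [restr, glue, hi.1, hi.2]

omit [∀ i, Fintype (U i)] [∀ i, DecidableEq (U i)] in
lemma restr_left_glue (α : PAssign U (I ∪ J)ᶜ) (τI : PAssign U I) (τJ : PAssign U J) :
    restr I (glue I J α τI τJ) = τI := by
  funext i
  simp [restr, glue, i.2]

omit [∀ i, Fintype (U i)] [∀ i, DecidableEq (U i)] in
lemma restr_right_glue {I J : Finset (Fin n)} (hIJ : Disjoint I J) (α : PAssign U (I ∪ J)ᶜ)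
    (τI : PAssign U I) (τJ : PAssign U J) : restr J (glue I J α τI τJ) = τJ := by
  funext i
  simp [restr, glue, i.2, Finset.disjoint_right.mp hIJ i.2]

omit [∀ i, Fintype (U i)] [∀ i, DecidableEq (U i)] in
lemma glue_restr (ω : ∀ i, U i) :
    glue I J (restr (I ∪ J)ᶜ ω) (restr I ω) (restr J ω) = ω := by
  funext i
  simp only [glue, restr]
  split_ifs <;> rfl

def glueEquiv {I J : Finset (Fin n)} (hIJ : Disjoint I J) :
    PAssign U (I ∪ J)ᶜ × PAssign U I × PAssign U J ≃ ∀ i, U i where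
  toFun p := glue I J p.1 p.2.1 p.2.2
  invFun ω := (restr (I ∪ J)ᶜ ω, restr I ω, restr J ω)
  left_inv p := by
    simp [restr_compl_glue, restr_left_glue, restr_right_glue hIJ]
  right_inv := glue_restr I J

omit [∀ i, DecidableEq (U i)] in
lemma sum_eq_sum_glue {I J : Finset (Fin n)} (hIJ : Disjoint I J) (Φ : (∀ i, U i) → ℝ) :
    ∑ ω, Φ ω = ∑ α, ∑ τI, ∑ τJ, Φ (glue I J α τI τJ) := by
  rw [← (glueEquiv hIJ).sum_comp]
  simp [glueEquiv, Fintype.sum_prod_type]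

end Glue

section BlockWeight

variable (X : WPC n U) (I J : Finset (Fin n))

/-- The unnormalized joint law of `(ω_I, ω_J)` under `π`, given `ω_{(I ∪ J)ᶜ} = α`. -/
def blockWeight (α : PAssign U (I ∪ J)ᶜ) (τI : PAssign U I) (τJ : PAssign U J) : ℝ :=
  X.π (glue I J α τI τJ)

lemma blockWeight_nonneg (α : PAssign U (I ∪ J)ᶜ) (τI : PAssign U I) (τJ : PAssign U J) :
    0 ≤ blockWeight X I J α τI τJ :=
  X.nonneg _

variable {I J} (hIJ : Disjoint I J)
include hIJ

lemma marg_eq_totalMass (α : PAssign U (I ∪ J)ᶜ) :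
    marg X (I ∪ J)ᶜ α = totalMass (blockWeight X I J α) := by
  simp [marg, pr, sum_eq_sum_glue hIJ, restr_compl_glue, totalMass, rowMass, blockWeight]

lemma cmarg_left_eq (α : PAssign U (I ∪ J)ᶜ) (τI : PAssign U I) :
    cmarg X α τI = rowMass (blockWeight X I J α) τI / totalMass (blockWeight X I J α) := by
  rw [cmarg, marg_eq_totalMass X hIJ]
  congr 1
  simp [pr, sum_eq_sum_glue hIJ, restr_compl_glue, restr_left_glue, rowMass, blockWeight,
    ite_and]

lemma cmarg_right_eq (α : PAssign U (I ∪ J)ᶜ) (τJ : PAssign U J) :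
    cmarg X α τJ = colMass (blockWeight X I J α) τJ / totalMass (blockWeight X I J α) := by
  rw [cmarg, marg_eq_totalMass X hIJ]
  congr 1
  simp [pr, sum_eq_sum_glue hIJ, restr_compl_glue, restr_right_glue hIJ, colMass, blockWeight,
    ite_and]

lemma Cwalk_eq (α : PAssign U (I ∪ J)ᶜ) (τI : PAssign U I) (τJ : PAssign U J) :
    Cwalk X (I ∪ J)ᶜ I J α τI τJ
      = blockWeight X I J α τI τJ / rowMass (blockWeight X I J α) τI := by
  rw [Cwalk]
  congr 1
  · simp [pr, sum_eq_sum_glue hIJ, restr_compl_glue, restr_left_glue, restr_right_glue hIJ,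
      blockWeight, ite_and]
  · simp [pr, sum_eq_sum_glue hIJ, restr_compl_glue, restr_left_glue, rowMass, blockWeight,
      ite_and]

lemma sigma2C_eq_jointSigma2 (α : PAssign U (I ∪ J)ᶜ) :
    sigma2C X (I ∪ J)ᶜ I J α = jointSigma2 (blockWeight X I J α) := by
  simp only [sigma2C, jointSigma2, cmarg_left_eq X hIJ, cmarg_right_eq X hIJ,
    funext₂ (Cwalk_eq X hIJ α)]

end BlockWeight

section Epsilon

variable (X : WPC n U) (I J : Finset (Fin n))

lemma epsIJ_nonneg : 0 ≤ epsIJ X I J :=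
  Real.sSup_nonneg fun _ ⟨_, _, hr⟩ => hr ▸ sigma2_nonneg _ _ _

lemma pr_nonneg (E : (∀ i, U i) → Prop) : 0 ≤ pr X E :=
  Finset.sum_nonneg fun ω _ => by
    split_ifs
    exacts [X.nonneg ω, le_rfl]

/-- An unrealizable `α` has `σ₂(C_α) = 0`, since `x / 0 = 0` makes its pinned marginals vanish. -/
lemma sigma2C_le_epsIJ (α : PAssign U (I ∪ J)ᶜ) : sigma2C X (I ∪ J)ᶜ I J α ≤ epsIJ X I J := by
  obtain hα | hα := (show 0 ≤ marg X (I ∪ J)ᶜ α from pr_nonneg X _).eq_or_lt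
  · rw [sigma2C, sigma2_eq_zero_of_forall_eq_zero fun τI => by rw [cmarg, ← hα, div_zero]]
    exact epsIJ_nonneg X I J
  · refine le_csSup ?_ ⟨α, hα, rfl⟩
    refine ((Set.finite_range fun α => sigma2C X (I ∪ J)ᶜ I J α).subset ?_).bddAbove
    rintro _ ⟨α, -, rfl⟩
    exact ⟨α, rfl⟩

end Epsilon

section Functions

variable {X : WPC n U}

lemma sum_subtype_eq_sum (Φ : (∀ i, U i) → ℝ) :
    ∑ ω : {ω // ω ∈ X.Ω}, X.π ω.1 * Φ ω.1 = ∑ ω, X.π ω * Φ ω := by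
  rw [Finset.sum_coe_sort X.Ω fun ω => X.π ω * Φ ω]
  refine Finset.sum_subset (Finset.subset_univ _) fun ω _ hω => ?_
  rw [le_antisymm (not_lt.mp (mt (X.support ω).mp hω)) (X.nonneg ω), zero_mul]

lemma exists_eq_comp_of_mem_Uinv {I K J : Finset (Fin n)} (hIKJ : Iᶜ ⊆ K ∪ J)
    {u : {ω // ω ∈ X.Ω} → ℝ} (hu : u ∈ Uinv X I) :
    ∃ F : PAssign U K → PAssign U J → ℝ, ∀ ω, u ω = F (restr K ω.1) (restr J ω.1) := by
  set p : {ω // ω ∈ X.Ω} → PAssign U K × PAssign U J := fun ω => (restr K ω.1, restr J ω.1)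
  have hup : u.FactorsThrough p := fun ω ω' h => hu ω ω' <| funext fun i => by
    rcases Finset.mem_union.mp (hIKJ i.2) with hK | hJ
    · exact congrFun (Prod.ext_iff.mp h).1 ⟨i, hK⟩
    · exact congrFun (Prod.ext_iff.mp h).2 ⟨i, hJ⟩
  exact ⟨fun α τ => Function.extend p u 0 (α, τ), fun ω => (hup.extend_apply 0 ω).symm⟩

lemma uvec_mem_Uinv {S T : Finset (Fin n)} (hST : S ⊆ T) (α : PAssign U Tᶜ) :
    uvec X T α ∈ Uinv X S := by
  intro ω ω' h
  have hT : restr Tᶜ ω.1 = restr Tᶜ ω'.1 :=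
    funext fun i => congrFun h ⟨i, Finset.compl_subset_compl.mpr hST i.2⟩
  simp only [uvec, hT]

variable {I J : Finset (Fin n)} (hIJ : Disjoint I J)
include hIJ

lemma ip_eq_sum_blockWeight {f g : {ω // ω ∈ X.Ω} → ℝ}
    (Φ : PAssign U (I ∪ J)ᶜ → PAssign U I → PAssign U J → ℝ)
    (h : ∀ ω, f ω * g ω = Φ (restr (I ∪ J)ᶜ ω.1) (restr I ω.1) (restr J ω.1)) :
    ip X f g = ∑ α, ∑ τI, ∑ τJ, blockWeight X I J α τI τJ * Φ α τI τJ := by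
  simp only [ip, mul_assoc, h]
  rw [sum_subtype_eq_sum (fun ω => Φ (restr (I ∪ J)ᶜ ω) (restr I ω) (restr J ω)),
    sum_eq_sum_glue hIJ]
  simp only [restr_compl_glue, restr_left_glue, restr_right_glue hIJ, blockWeight]

lemma ip_eq_sum_rowMass {f g : {ω // ω ∈ X.Ω} → ℝ} (Φ : PAssign U (I ∪ J)ᶜ → PAssign U I → ℝ)
    (h : ∀ ω, f ω * g ω = Φ (restr (I ∪ J)ᶜ ω.1) (restr I ω.1)) :
    ip X f g = ∑ α, ∑ τI, rowMass (blockWeight X I J α) τI * Φ α τI := by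
  simp only [ip_eq_sum_blockWeight hIJ (fun α τI _ => Φ α τI) h, sum_sum_mul_left]

lemma ip_eq_sum_colMass {f g : {ω // ω ∈ X.Ω} → ℝ} (Φ : PAssign U (I ∪ J)ᶜ → PAssign U J → ℝ)
    (h : ∀ ω, f ω * g ω = Φ (restr (I ∪ J)ᶜ ω.1) (restr J ω.1)) :
    ip X f g = ∑ α, ∑ τJ, colMass (blockWeight X I J α) τJ * Φ α τJ := by
  simp only [ip_eq_sum_blockWeight hIJ (fun α _ τJ => Φ α τJ) h, sum_sum_mul_right]

end Functions

section Orthogonality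

variable {X : WPC n U} {I J : Finset (Fin n)} (hIJ : Disjoint I J)
include hIJ

lemma sum_rowMass_mul_eq_zero {v : {ω // ω ∈ X.Ω} → ℝ} {G : PAssign U (I ∪ J)ᶜ → PAssign U I → ℝ}
    (hG : ∀ ω, v ω = G (restr (I ∪ J)ᶜ ω.1) (restr I ω.1))
    (hv : v ∈ orthC X (Uinv X I ⊓ Uinv X J)) (α : PAssign U (I ∪ J)ᶜ) :
    ∑ τI, rowMass (blockWeight X I J α) τI * G α τI = 0 := by
  have h := hv _ (Submodule.mem_inf.mpr
    ⟨uvec_mem_Uinv Finset.subset_union_left α, uvec_mem_Uinv Finset.subset_union_right α⟩)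
  rw [ip_eq_sum_rowMass hIJ (fun β τI => if β = α then G β τI else 0)
    fun ω => by simp [hG, uvec]] at h
  simpa using h

lemma sum_colMass_mul_eq_zero {u : {ω // ω ∈ X.Ω} → ℝ} {F : PAssign U (I ∪ J)ᶜ → PAssign U J → ℝ}
    (hF : ∀ ω, u ω = F (restr (I ∪ J)ᶜ ω.1) (restr J ω.1))
    (hu : u ∈ orthC X (Uinv X I ⊓ Uinv X J)) (α : PAssign U (I ∪ J)ᶜ) :
    ∑ τJ, colMass (blockWeight X I J α) τJ * F α τJ = 0 := by
  have h := hu _ (Submodule.mem_inf.mpr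
    ⟨uvec_mem_Uinv Finset.subset_union_left α, uvec_mem_Uinv Finset.subset_union_right α⟩)
  rw [ip_eq_sum_colMass hIJ (fun β τJ => if β = α then F β τJ else 0)
    fun ω => by simp [hF, uvec]] at h
  simpa using h

lemma sum_sum_blockWeight_mul_mul_le_epsIJ (α : PAssign U (I ∪ J)ᶜ) {G : PAssign U I → ℝ}
    {F : PAssign U J → ℝ} (hG : ∑ τI, rowMass (blockWeight X I J α) τI * G τI = 0)
    (hF : ∑ τJ, colMass (blockWeight X I J α) τJ * F τJ = 0) :
    ∑ τI, ∑ τJ, blockWeight X I J α τI τJ * G τI * F τJ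
      ≤ epsIJ X I J * (√(∑ τI, rowMass (blockWeight X I J α) τI * G τI ^ 2)
        * √(∑ τJ, colMass (blockWeight X I J α) τJ * F τJ ^ 2)) := by
  refine (sum_sum_mul_mul_le_jointSigma2 (blockWeight_nonneg X I J α) hG hF).trans ?_
  rw [mul_assoc, ← sigma2C_eq_jointSigma2 X hIJ]
  gcongr
  exact sigma2C_le_epsIJ X I J α

end Orthogonality

theorem cos_le_epsIJ_general
    (X : WPC n U) (I J : Finset (Fin n)) (hIJ : Disjoint I J) :
    cosAngle X (Uinv X I) (Uinv X J) ≤ epsIJ X I J := by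
  refine Real.sSup_le ?_ (epsIJ_nonneg X I J)
  rintro _ ⟨u, hu, huO, v, hv, hvO, huu, hvv, rfl⟩
  obtain ⟨F, hF⟩ := exists_eq_comp_of_mem_Uinv (K := (I ∪ J)ᶜ) (J := J)
    (fun i => by simp only [Finset.mem_compl, Finset.mem_union]; tauto) hu
  obtain ⟨G, hG⟩ := exists_eq_comp_of_mem_Uinv (K := (I ∪ J)ᶜ) (J := I)
    (fun i => by simp only [Finset.mem_compl, Finset.mem_union]; tauto) hv
  set w := blockWeight X I J
  set a := fun α => ∑ τI, rowMass (w α) τI * G α τI ^ 2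
  set b := fun α => ∑ τJ, colMass (w α) τJ * F α τJ ^ 2
  have ha : ∑ α, a α = 1 := by
    rw [← hvv, ip_eq_sum_rowMass hIJ (fun α τI => G α τI ^ 2) fun ω => by rw [hG, sq]]
  have hb : ∑ α, b α = 1 := by
    rw [← huu, ip_eq_sum_colMass hIJ (fun α τJ => F α τJ ^ 2) fun ω => by rw [hF, sq]]
  have hε := epsIJ_nonneg X I J
  calc ip X u v = ∑ α, ∑ τI, ∑ τJ, w α τI τJ * G α τI * F α τJ := by
        rw [ip_eq_sum_blockWeight hIJ (fun α τI τJ => G α τI * F α τJ)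
          fun ω => by rw [hF, hG, mul_comm]]
        simp only [w, mul_assoc]
    _ ≤ ∑ α, epsIJ X I J * (√(a α) * √(b α)) := Finset.sum_le_sum fun α _ =>
        sum_sum_blockWeight_mul_mul_le_epsIJ hIJ α (sum_rowMass_mul_eq_zero hIJ hG hvO α)
          (sum_colMass_mul_eq_zero hIJ hF huO α)
    _ = epsIJ X I J * ∑ α, √(a α) * √(b α) := (Finset.mul_sum _ _ _).symm
    _ ≤ epsIJ X I J * (√(∑ α, a α) * √(∑ α, b α)) := by
        gcongr
        exact Real.sum_sqrt_mul_sqrt_le _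
          (fun α => sum_rowMass_mul_sq_nonneg (blockWeight_nonneg X I J α) _)
          (fun α => sum_colMass_mul_sq_nonneg (blockWeight_nonneg X I J α) _)
    _ = epsIJ X I J := by rw [ha, hb, Real.sqrt_one, mul_one, mul_one]

theorem cos_le_epsIJ
    (X : WPC n U) (hconn : linkConnected X) (I J : Finset (Fin n)) (hIJ : Disjoint I J) :
    cosAngle X (Uinv X I) (Uinv X J) ≤ epsIJ X I J :=
  cos_le_epsIJ_general X I J hIJ

end PaperFormal
end
end

section
/- Let (X, π) be a link-connected weighted n-partite simplicial complex. For T ⊆ [n], let U_T ⊆ ℝ^Ω be the subspace of functions on the top faces depending only on the coordinates outside T, equivalently U_T = span{u_α : α ∈ Ω[[n]∖T]} where u_α(ω) = 1 if ω restricts to α on [n]∖T and 0 otherwise. Then U_T = ⋂_{t∈T} U_{{t}}. -/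
open Finset
open scoped Classical

noncomputable section

/-!
A function on `Ω` invariant under changing any single coordinate of `T` is invariant under
changing all of them, by induction on `|T|`. Fix the coordinates outside `T` to `α`. By
induction, two faces extending `α` on which `f` differs cannot share a vertex `(i, x)` with
`i ∈ T`. Each edge of the link graph `G_α` is witnessed by a face containing both of its
endpoints, so the value of `f` propagates along walks in `G_α`; link-connectivity then
joins any two faces extending `α`.
-/

namespace PaperFormal

variable {n : ℕ} {U : Fin n → Type*}

lemma restr_eq_restr_iff {S : Finset (Fin n)} {ω ω' : ∀ i, U i} :
    restr S ω = restr S ω' ↔ ∀ i ∈ S, ω i = ω' i :=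
  ⟨fun h i hi => congrFun h ⟨i, hi⟩, fun h => funext fun i => h i.1 i.2⟩

lemma restr_compl_erase_eq {T : Finset (Fin n)} {ω ω' : ∀ i, U i} {t : Fin n}
    (hT : restr Tᶜ ω = restr Tᶜ ω') (ht : ω t = ω' t) :
    restr (T.erase t)ᶜ ω = restr (T.erase t)ᶜ ω' := by
  rw [restr_eq_restr_iff] at hT ⊢
  intro i hi
  by_cases hit : i = t
  · rwa [hit]
  · exact hT i (by simp_all)

variable [∀ i, Fintype (U i)] [∀ i, DecidableEq (U i)] (X : WPC n U)

lemma pr_pos_of_mem {E : (∀ i, U i) → Prop} {ω : ∀ i, U i} (hω : ω ∈ X.Ω) (hE : E ω) :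
    0 < pr X E :=
  Finset.sum_pos' (fun ω _ => by split <;> simp [X.nonneg])
    ⟨ω, mem_univ _, by simpa [hE] using (X.support ω).2 hω⟩

lemma exists_mem_of_pr_pos {E : (∀ i, U i) → Prop} (h : 0 < pr X E) :
    ∃ ω ∈ X.Ω, E ω := by
  obtain ⟨ω, -, hω⟩ := Finset.exists_lt_of_sum_lt (h.trans_eq' Finset.sum_const_zero.symm)
  by_cases hE : E ω
  · exact ⟨ω, (X.support ω).1 (by simpa [hE] using hω), hE⟩
  · simp [hE] at hω

lemma Uinv_empty : Uinv X ∅ = ⊤ :=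
  eq_top_iff.2 fun _ _ ω ω' h =>
    congrArg _ (Subtype.ext (funext fun i => restr_eq_restr_iff.1 h i (by simp)))

lemma Uinv_anti {S T : Finset (Fin n)} (hST : S ⊆ T) : Uinv X T ≤ Uinv X S :=
  fun _ hf ω ω' h => hf ω ω' <| restr_eq_restr_iff.2 fun i hi =>
    restr_eq_restr_iff.1 h i (compl_subset_compl.2 hST hi)

lemma Uspan_eq_Uinv (T : Finset (Fin n)) : Uspan X T = Uinv X T := by
  refine le_antisymm (Submodule.span_le.2 ?_) fun f hf => ?_
  · rintro _ ⟨α, rfl⟩ ω ω' h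
    simp only [uvec, h]
  · have hfac : f.FactorsThrough fun ω => restr Tᶜ ω.1 := hf
    set c := Function.extend (fun ω : {ω // ω ∈ X.Ω} => restr Tᶜ ω.1) f 0
    have hf_eq : f = ∑ α, c α • uvec X T α := by
      funext ω
      simp [uvec, c, hfac.extend_apply]
    rw [hf_eq]
    exact Submodule.sum_mem _ fun α _ => Submodule.smul_mem _ _ (Submodule.subset_span ⟨α, rfl⟩)

lemma eq_of_linkGraph_reachable {S : Finset (Fin n)} {α : PAssign U S}
    (f : {ω // ω ∈ X.Ω} → ℝ)
    (hshare : ∀ ρ ρ' : {ω // ω ∈ X.Ω}, restr S ρ.1 = α → restr S ρ'.1 = α →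
      ∀ i ∉ S, ρ.1 i = ρ'.1 i → f ρ = f ρ')
    {v w : (i : Fin n) × U i} (hvw : (linkGraph X S α).Reachable v w) (hv : v.1 ∉ S)
    {ρ ρ' : {ω // ω ∈ X.Ω}} (hρ : restr S ρ.1 = α) (hρ' : restr S ρ'.1 = α)
    (hρv : ρ.1 v.1 = v.2) (hρ'w : ρ'.1 w.1 = w.2) : f ρ = f ρ' := by
  obtain ⟨p⟩ := hvw
  induction p generalizing ρ with
  | nil => exact hshare ρ ρ' hρ hρ' _ hv (hρv.trans hρ'w.symm)
  | cons hadj _ ih =>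
    obtain ⟨-, haS, hbS, hpos⟩ := hadj
    obtain ⟨τ, hτ, hτα, hτa, hτb⟩ := exists_mem_of_pr_pos X hpos
    exact (hshare ρ ⟨τ, hτ⟩ hρ hτα _ haS (hρv.trans hτa.symm)).trans
      (ih (ρ := ⟨τ, hτ⟩) hbS hτα hτb hρ'w)

variable {X}

lemma mem_Uinv_of_forall_mem_Uinv_singleton (hconn : linkConnected X)
    {f : {ω // ω ∈ X.Ω} → ℝ} (T : Finset (Fin n)) (hf : ∀ t ∈ T, f ∈ Uinv X {t}) :
    f ∈ Uinv X T := by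
  induction T using Finset.strongInduction with
  | H T ih =>
  rcases Nat.lt_or_ge T.card 2 with hT | hT
  · obtain rfl | ⟨t, rfl⟩ : T = ∅ ∨ ∃ t, T = {t} := by
      rcases Nat.lt_succ_iff.1 hT |>.lt_or_eq with h | h
      · exact .inl (card_eq_zero.1 (by omega))
      · exact .inr (card_eq_one.1 h)
    · simp [Uinv_empty]
    · exact hf t (mem_singleton_self t)
  intro ω ω' hωω'
  obtain ⟨t, ht⟩ : T.Nonempty := card_pos.1 (by omega)
  have htS : t ∉ Tᶜ := by simpa using ht
  have hcard : Tᶜ.card ≤ n - 2 := by rw [card_compl, Fintype.card_fin]; omega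
  have hshare : ∀ ρ ρ' : {ω // ω ∈ X.Ω}, restr Tᶜ ρ.1 = restr Tᶜ ω.1 →
      restr Tᶜ ρ'.1 = restr Tᶜ ω.1 → ∀ i ∉ Tᶜ, ρ.1 i = ρ'.1 i → f ρ = f ρ' := by
    intro ρ ρ' hρ hρ' i hi hρρ'
    have hiT : i ∈ T := by simpa using hi
    exact ih (T.erase i) (erase_ssubset hiT) (fun s hs => hf s (mem_of_mem_erase hs)) ρ ρ'
      (restr_compl_erase_eq (hρ.trans hρ'.symm) hρρ')
  have hreach := hconn Tᶜ hcard _ (pr_pos_of_mem X ω.2 rfl) ⟨t, ω.1 t⟩ ⟨t, ω'.1 t⟩ htS htS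
    (pr_pos_of_mem X ω.2 ⟨rfl, rfl⟩) (pr_pos_of_mem X ω'.2 ⟨hωω'.symm, rfl⟩)
  exact eq_of_linkGraph_reachable X f hshare hreach htS rfl hωω'.symm rfl rfl

theorem Uinv_eq_iInf (hconn : linkConnected X) (T : Finset (Fin n)) :
    Uinv X T = ⨅ t ∈ T, Uinv X {t} :=
  le_antisymm (le_iInf₂ fun _ ht => Uinv_anti X (singleton_subset_iff.2 ht)) fun _ hf =>
    mem_Uinv_of_forall_mem_Uinv_singleton hconn T fun t ht => by
      simp only [Submodule.mem_iInf] at hf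
      exact hf t ht

theorem Uspan_eq_iInf
    (X : WPC n U) (hconn : linkConnected X) (T : Finset (Fin n)) :
    Uspan X T = ⨅ t ∈ T, Uspan X {t} := by
  simp only [Uspan_eq_Uinv]
  exact Uinv_eq_iInf hconn T

end PaperFormal
end
end
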